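/- arXiv:2210.07893 — 2 statements merged into one kernel-verified Lean document; each statement's English description precedes it below -/
import Mathlib

section
/- Let d ≥ 1 be an integer, δ > 0, and let ψ : [0,∞) → [0,∞) be nonincreasing with ∑_{m=1}^∞ m^{d−1} ψ(mδ) < ∞; write C = ψ(0) + 10^d ∑_{m=1}^∞ m^{d−1} ψ(mδ). Let k : ℝ^d × ℝ^d → ℝ be a symmetric positive semi-definite kernel with |k(x,x')| ≤ ψ(‖x − x'‖) for all x, x'. Let x₁,…,x_N be δ-separated points in ℝ^d, K the N×N matrix with K_{ij} = k(x_i,x_j), and Λ a diagonal N×N matrix whose diagonal entries all lie in [Λ_min, Λ_max] with Λ_min > 0. Then K + Λ is positive definite and its condition number satisfies cond(K + Λ) ≤ (C + Λ_max)/Λ_min. -/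
/-!
Every eigenvalue of `K + Λ` is at least `Λ_min`, since `K + Λ - Λ_min` is positive semi-definite,
and by Gershgorin at most `max_i (K_ii + Λ_ii + ∑_{j ≠ i} |K_ij|)`. The off-diagonal row sum is
controlled by packing: the points with `mδ ≤ ‖x_i - x_j‖ < (m + 1)δ` carry disjoint balls of
radius `δ / 2` inside an annulus of volume proportional to `(2m + 3)^d - (2m - 1)^d ≤ 10^d m^(d-1)`
(in units of `(δ / 2)^d`), so shell `m` contributes at most `10^d m^(d-1) ψ(mδ)`.
-/

open Finset Matrix Metric MeasureTheory Module

theorem four_mul_mul_five_pow_le_ten_pow (d : ℕ) : 4 * d * 5 ^ (d - 1) ≤ 10 ^ d := by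
  rcases d with _ | n
  · simp
  · have h2 : n + 1 < 2 ^ (n + 1) := Nat.lt_two_pow_self
    have h10 : 10 ^ (n + 1) = 5 * 2 ^ (n + 1) * 5 ^ n := by
      rw [show (10 : ℕ) = 2 * 5 by rfl, mul_pow, pow_succ 5]; ring
    rw [h10, Nat.add_sub_cancel]
    gcongr
    omega

theorem two_mul_add_three_pow_sub_le (d m : ℕ) (hm : 1 ≤ m) :
    (2 * m + 3 : ℝ) ^ d - (2 * m - 1) ^ d ≤ 10 ^ d * (m : ℝ) ^ (d - 1) := by
  have hm' : (1 : ℝ) ≤ m := by exact_mod_cast hm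
  have hmax : max |(2 * m + 3 : ℝ)| |2 * m - 1| = 2 * m + 3 := by
    rw [abs_of_nonneg (by linarith), abs_of_nonneg (by linarith)]
    exact max_eq_left (by linarith)
  have hten : (4 * d * 5 ^ (d - 1) : ℝ) ≤ 10 ^ d := by
    exact_mod_cast four_mul_mul_five_pow_le_ten_pow d
  calc (2 * m + 3 : ℝ) ^ d - (2 * m - 1) ^ d
      ≤ |(2 * m + 3 : ℝ) - (2 * m - 1)| * d * max |(2 * m + 3 : ℝ)| |2 * m - 1| ^ (d - 1) :=
        (le_abs_self _).trans (abs_pow_sub_pow_le _ _ _)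
    _ ≤ 4 * d * (5 * m) ^ (d - 1) := by
        rw [hmax, show (2 * m + 3 : ℝ) - (2 * m - 1) = 4 by ring, abs_of_pos four_pos]
        gcongr
        linarith
    _ = 4 * d * 5 ^ (d - 1) * (m : ℝ) ^ (d - 1) := by ring
    _ ≤ 10 ^ d * (m : ℝ) ^ (d - 1) := by gcongr

theorem add_one_mul_le_and_le_add_two_mul_floor {δ t : ℝ} (hδ : 0 < δ) (ht : δ ≤ t) :
    ((⌊t / δ - 1⌋₊ : ℝ) + 1) * δ ≤ t ∧ t ≤ ((⌊t / δ - 1⌋₊ : ℝ) + 2) * δ := by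
  have hlo := Nat.floor_le (a := t / δ - 1) (by rw [sub_nonneg, le_div_iff₀ hδ]; linarith)
  have hhi := Nat.lt_floor_add_one (t / δ - 1)
  constructor
  · rw [← le_div_iff₀ hδ]; linarith
  · rw [← div_le_iff₀ hδ]; linarith

section Packing

variable {E : Type*} [NormedAddCommGroup E] [NormedSpace ℝ E] [FiniteDimensional ℝ E]
  [MeasurableSpace E] [BorelSpace E]

-- The balls of radius `δ / 2` around the points are disjoint from each other and from the ball of
-- radius `r - δ / 2` about `c`, and all of them lie in the ball of radius `R + δ / 2` about `c`.
theorem card_mul_pow_le_of_separated_of_mem_annulus {ι : Type*} {p : ι → E} {s : Finset ι}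
    {c : E} {δ r R : ℝ} (hδ : 0 < δ) (hr : δ / 2 < r) (hrR : r ≤ R)
    (hsep : (s : Set ι).Pairwise fun i j => δ ≤ dist (p i) (p j))
    (hs : ∀ j ∈ s, r ≤ dist (p j) c ∧ dist (p j) c ≤ R) :
    #s * (δ / 2) ^ finrank ℝ E ≤ (R + δ / 2) ^ finrank ℝ E - (r - δ / 2) ^ finrank ℝ E := by
  let μ : Measure E := Measure.addHaar
  set U := ⋃ j ∈ s, ball (p j) (δ / 2)
  have hdisj : (s : Set ι).PairwiseDisjoint fun j => ball (p j) (δ / 2) :=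
    fun i hi j hj hij => ball_disjoint_ball (by linarith [hsep hi hj hij])
  have hinner : Disjoint (ball c (r - δ / 2)) U :=
    Set.disjoint_iUnion₂_right.mpr fun j hj =>
      ball_disjoint_ball (by linarith [dist_comm c (p j), (hs j hj).1])
  have hsub : ball c (r - δ / 2) ∪ U ⊆ closedBall c (R + δ / 2) := by
    refine Set.union_subset (ball_subset_closedBall.trans (closedBall_subset_closedBall ?_)) ?_
    · linarith
    · refine Set.iUnion₂_subset fun j hj y hy => ?_
      rw [mem_closedBall]
      linarith [dist_triangle y (p j) c, mem_ball.mp hy, (hs j hj).2]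
  have hvol : μ (ball c (r - δ / 2)) + ∑ j ∈ s, μ (ball (p j) (δ / 2))
      ≤ μ (closedBall c (R + δ / 2)) := by
    rw [← measure_biUnion_finset hdisj fun j _ => measurableSet_ball,
      ← measure_union hinner (s.measurableSet_biUnion fun j _ => measurableSet_ball)]
    exact measure_mono hsub
  simp only [Measure.addHaar_ball_of_pos μ _ (by linarith : 0 < r - δ / 2),
    Measure.addHaar_ball_of_pos μ _ (half_pos hδ), Measure.addHaar_closedBall μ _
      (by linarith : 0 ≤ R + δ / 2), sum_const, nsmul_eq_mul, ← mul_assoc, ← add_mul] at hvol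
  have hunit : μ (ball 0 1) ≠ 0 := (measure_ball_pos μ 0 one_pos).ne'
  have hin : 0 ≤ (r - δ / 2) ^ finrank ℝ E := pow_nonneg (by linarith) _
  rw [ENNReal.mul_le_mul_iff_left hunit measure_ball_lt_top.ne, ← ENNReal.ofReal_natCast,
    ← ENNReal.ofReal_mul (by positivity), ← ENNReal.ofReal_add hin (by positivity),
    ENNReal.ofReal_le_ofReal_iff (pow_nonneg (by linarith) _)] at hvol
  linarith

theorem card_le_of_separated_of_mem_shell {ι : Type*} {p : ι → E} {s : Finset ι} {c : E}
    {δ : ℝ} (hδ : 0 < δ) (hsep : (s : Set ι).Pairwise fun i j => δ ≤ dist (p i) (p j))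
    {m : ℕ} (hm : 1 ≤ m) (hs : ∀ j ∈ s, m * δ ≤ dist (p j) c ∧ dist (p j) c ≤ (m + 1) * δ) :
    (#s : ℝ) ≤ 10 ^ finrank ℝ E * (m : ℝ) ^ (finrank ℝ E - 1) := by
  have hm' : (1 : ℝ) ≤ m := by exact_mod_cast hm
  have hpack := card_mul_pow_le_of_separated_of_mem_annulus hδ (by nlinarith)
    (by nlinarith) hsep hs
  rw [show (m + 1) * δ + δ / 2 = (2 * m + 3) * (δ / 2) by ring,
    show m * δ - δ / 2 = (2 * m - 1) * (δ / 2) by ring, mul_pow, mul_pow, ← sub_mul] at hpack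
  exact (le_of_mul_le_mul_right hpack (by positivity)).trans
    (two_mul_add_three_pow_sub_le _ m hm)

theorem sum_erase_le_of_separated {ι : Type*} [Fintype ι] [DecidableEq ι] {x : ι → E} {δ : ℝ}
    (hδ : 0 < δ) (hsep : Pairwise fun i j => δ ≤ ‖x i - x j‖) {ψ : ℝ → ℝ}
    (hψ_nonneg : ∀ t, 0 ≤ ψ t) (hψ_mono : AntitoneOn ψ (Set.Ici 0))
    (hψ_sum : Summable fun m : ℕ => ((m : ℝ) + 1) ^ (finrank ℝ E - 1) * ψ ((m + 1) * δ))
    (i : ι) :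
    ∑ j ∈ univ.erase i, ψ ‖x i - x j‖ ≤
      10 ^ finrank ℝ E * ∑' m : ℕ, ((m : ℝ) + 1) ^ (finrank ℝ E - 1) * ψ ((m + 1) * δ) := by
  set d := finrank ℝ E
  let shell j := ⌊‖x i - x j‖ / δ - 1⌋₊
  have hshell (j : ι) (hj : j ∈ univ.erase i) :
      ((shell j : ℝ) + 1) * δ ≤ ‖x i - x j‖ ∧ ‖x i - x j‖ ≤ ((shell j : ℝ) + 2) * δ :=
    add_one_mul_le_and_le_add_two_mul_floor hδ (hsep (ne_of_mem_erase hj).symm)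
  have hcard (n : ℕ) :
      (#{j ∈ univ.erase i | shell j = n} : ℝ) ≤ 10 ^ d * ((n : ℝ) + 1) ^ (d - 1) := by
    have hcard_shell := card_le_of_separated_of_mem_shell (p := x) (c := x i) hδ
      (fun j _ k _ hjk => (hsep hjk).trans_eq (dist_eq_norm _ _).symm) (Nat.le_add_left 1 n)
      (s := {j ∈ univ.erase i | shell j = n}) (by
        intro j hj
        obtain ⟨hji, rfl⟩ := mem_filter.mp hj
        rw [dist_comm, dist_eq_norm]
        push_cast
        constructor <;> linarith [hshell j hji])
    exact_mod_cast hcard_shell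
  calc ∑ j ∈ univ.erase i, ψ ‖x i - x j‖
      ≤ ∑ j ∈ univ.erase i, ψ ((shell j + 1) * δ) :=
        sum_le_sum fun j hj => hψ_mono (Set.mem_Ici.mpr (by positivity))
          (Set.mem_Ici.mpr (norm_nonneg _)) (hshell j hj).1
    _ = ∑ n ∈ (univ.erase i).image shell, #{j ∈ univ.erase i | shell j = n} * ψ ((n + 1) * δ) := by
        rw [sum_comp (fun n : ℕ => ψ ((n + 1) * δ))]
        simp only [nsmul_eq_mul]
    _ ≤ ∑ n ∈ (univ.erase i).image shell, 10 ^ d * (((n : ℝ) + 1) ^ (d - 1) * ψ ((n + 1) * δ)) :=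
        sum_le_sum fun n _ => (mul_assoc (10 ^ d : ℝ) _ _) ▸
          mul_le_mul_of_nonneg_right (hcard n) (hψ_nonneg _)
    _ ≤ _ := by
        rw [← mul_sum]
        gcongr
        exact hψ_sum.sum_le_tsum _ fun n _ => mul_nonneg (by positivity) (hψ_nonneg _)

end Packing

namespace Matrix

variable {n : Type*} [Fintype n] [DecidableEq n]

theorem le_of_mem_spectrum_of_forall_add_sum_abs_le {A : Matrix n n ℝ} {c μ : ℝ}
    (hA : ∀ k, A k k + ∑ j ∈ univ.erase k, |A k j| ≤ c) (hμ : μ ∈ spectrum ℝ A) : μ ≤ c := by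
  obtain ⟨k, hk⟩ := eigenvalue_mem_ball
    (Module.End.HasEigenvalue.of_mem_spectrum ((spectrum_toLin' A).symm ▸ hμ))
  rw [mem_closedBall, Real.dist_eq] at hk
  simp only [Real.norm_eq_abs] at hk
  linarith [le_abs_self (μ - A k k), hA k]

open scoped MatrixOrder in
theorem PosSemidef.le_of_mem_spectrum_add_diagonal {K : Matrix n n ℝ} (hK : K.PosSemidef)
    {lam : n → ℝ} {c μ : ℝ} (hc : ∀ i, c ≤ lam i) (hμ : μ ∈ spectrum ℝ (K + diagonal lam)) :
    c ≤ μ := by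
  have hle : algebraMap ℝ (Matrix n n ℝ) c ≤ K + diagonal lam := by
    rw [le_iff, algebraMap_eq_diagonal, add_sub_assoc, diagonal_sub]
    exact hK.add (posSemidef_diagonal_iff.mpr fun i => sub_nonneg.mpr (hc i))
  exact (algebraMap_le_iff_le_spectrum
    (hK.isHermitian.add (isHermitian_diagonal lam)).isSelfAdjoint).mp hle μ hμ

end Matrix

theorem condition_number_bound_of_separated_general
    (d : ℕ) (δ : ℝ) (hδ : 0 < δ)
    (ψ : ℝ → ℝ) (hψ_nonneg : ∀ t, 0 ≤ ψ t) (hψ_mono : AntitoneOn ψ (Set.Ici 0))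
    (hψ_sum : Summable fun m : ℕ => ((m : ℝ) + 1) ^ (d - 1) * ψ (((m : ℝ) + 1) * δ))
    (C : ℝ)
    (hC : C = ψ 0 + 10 ^ d * ∑' m : ℕ, ((m : ℝ) + 1) ^ (d - 1) * ψ (((m : ℝ) + 1) * δ))
    (k : EuclideanSpace ℝ (Fin d) → EuclideanSpace ℝ (Fin d) → ℝ)
    (hk_psd : ∀ (n : ℕ) (y : Fin n → EuclideanSpace ℝ (Fin d)),
      (Matrix.of fun i j => k (y i) (y j)).PosSemidef)
    (hk_decay : ∀ x y, |k x y| ≤ ψ ‖x - y‖)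
    (N : ℕ) (hN : 0 < N) (x : Fin N → EuclideanSpace ℝ (Fin d))
    (hsep : ∀ i j, i ≠ j → δ ≤ ‖x i - x j‖)
    (K : Matrix (Fin N) (Fin N) ℝ)
    (hKdef : K = Matrix.of fun i j => k (x i) (x j))
    (Λmin Λmax : ℝ) (hΛmin : 0 < Λmin)
    (lam : Fin N → ℝ) (hlam : ∀ i, Λmin ≤ lam i ∧ lam i ≤ Λmax)
    (hH : (K + Matrix.diagonal lam).IsHermitian) :
    (K + Matrix.diagonal lam).PosDef ∧
      (⨆ i, hH.eigenvalues i) / (⨅ i, hH.eigenvalues i) ≤ (C + Λmax) / Λmin := by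
  have : Nonempty (Fin N) := Fin.pos_iff_nonempty.mp hN
  have hK : K.PosSemidef := hKdef ▸ hk_psd N x
  have hrow (i : Fin N) : (K + diagonal lam) i i + ∑ j ∈ univ.erase i, |(K + diagonal lam) i j|
      ≤ C + Λmax := by
    have hoff := sum_erase_le_of_separated hδ (fun i j hij => hsep i j hij) hψ_nonneg hψ_mono
      (by rwa [finrank_euclideanSpace_fin]) i
    rw [finrank_euclideanSpace_fin] at hoff
    have hdiag : K i i ≤ ψ 0 := by
      simpa [hKdef] using (le_abs_self _).trans (hk_decay (x i) (x i))
    have hdecay :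
        ∑ j ∈ univ.erase i, |(K + diagonal lam) i j| ≤ ∑ j ∈ univ.erase i, ψ ‖x i - x j‖ :=
      sum_le_sum fun j hj => by
        simpa [hKdef, diagonal_apply_ne _ (ne_of_mem_erase hj).symm] using hk_decay (x i) (x j)
    rw [Matrix.add_apply, diagonal_apply_eq]
    linarith [(hlam i).2]
  have hbounds (i : Fin N) : Λmin ≤ hH.eigenvalues i ∧ hH.eigenvalues i ≤ C + Λmax :=
    ⟨hK.le_of_mem_spectrum_add_diagonal (fun j => (hlam j).1) (hH.eigenvalues_mem_spectrum_real i),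
      le_of_mem_spectrum_of_forall_add_sum_abs_le hrow (hH.eigenvalues_mem_spectrum_real i)⟩
  obtain ⟨i₀⟩ := ‹Nonempty (Fin N)›
  refine ⟨hH.posDef_iff_eigenvalues_pos.mpr fun i => hΛmin.trans_le (hbounds i).1, ?_⟩
  exact div_le_div₀ (hΛmin.le.trans ((hbounds i₀).1.trans (hbounds i₀).2))
    (ciSup_le fun i => (hbounds i).2) hΛmin (le_ciInf fun i => (hbounds i).1)

/-- For a symmetric positive semi-definite kernel `k` with nonincreasing
envelope `ψ` satisfying `∑ m^{d-1} ψ(mδ) < ∞`, write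
`C = ψ(0) + 10^d ∑_{m≥1} m^{d−1} ψ(mδ)`.  For `δ`-separated points `x₁, …, x_N`, the kernel
matrix `K`, and a diagonal matrix `Λ` with diagonal entries in `[Λ_min, Λ_max]`, `Λ_min > 0`,
the matrix `K + Λ` is positive definite and `cond(K + Λ) ≤ (C + Λ_max) / Λ_min`. -/
theorem condition_number_bound_of_separated
    (d : ℕ) (hd : 1 ≤ d) (δ : ℝ) (hδ : 0 < δ)
    (ψ : ℝ → ℝ) (hψ_nonneg : ∀ t, 0 ≤ ψ t) (hψ_mono : AntitoneOn ψ (Set.Ici 0))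
    (hψ_sum : Summable fun m : ℕ => ((m : ℝ) + 1) ^ (d - 1) * ψ (((m : ℝ) + 1) * δ))
    (C : ℝ)
    (hC : C = ψ 0 + 10 ^ d * ∑' m : ℕ, ((m : ℝ) + 1) ^ (d - 1) * ψ (((m : ℝ) + 1) * δ))
    (k : EuclideanSpace ℝ (Fin d) → EuclideanSpace ℝ (Fin d) → ℝ)
    (hk_symm : ∀ x y, k x y = k y x)
    (hk_psd : ∀ (n : ℕ) (y : Fin n → EuclideanSpace ℝ (Fin d)),
      (Matrix.of fun i j => k (y i) (y j)).PosSemidef)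
    (hk_decay : ∀ x y, |k x y| ≤ ψ ‖x - y‖)
    (N : ℕ) (hN : 0 < N) (x : Fin N → EuclideanSpace ℝ (Fin d))
    (hsep : ∀ i j, i ≠ j → δ ≤ ‖x i - x j‖)
    (K : Matrix (Fin N) (Fin N) ℝ)
    (hKdef : K = Matrix.of fun i j => k (x i) (x j))
    (Λmin Λmax : ℝ) (hΛmin : 0 < Λmin)
    (lam : Fin N → ℝ) (hlam : ∀ i, Λmin ≤ lam i ∧ lam i ≤ Λmax)
    (hH : (K + Matrix.diagonal lam).IsHermitian) :
    (K + Matrix.diagonal lam).PosDef ∧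
      (⨆ i, hH.eigenvalues i) / (⨅ i, hH.eigenvalues i) ≤ (C + Λmax) / Λmin :=
  condition_number_bound_of_separated_general d δ hδ ψ hψ_nonneg hψ_mono hψ_sum C hC k hk_psd
    hk_decay N hN x hsep K hKdef Λmin Λmax hΛmin lam hlam hH
end

section
/- Let k be a continuous stationary positive semi-definite kernel on ℝ^d, i.e. k(x,x') = κ(x − x') for a continuous function κ, with variance σ² = κ(0). Let X ⊆ ℝ^d be a compact set with positive Lebesgue measure, and let x₁, x₂, … be independent random points, each uniformly distributed on X. For each N, let K_N be the N×N matrix with entries k(x_i, x_j), 1 ≤ i, j ≤ N. Then, almost surely, the smallest eigenvalue of K_N converges to 0 as N → ∞. -/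
/-!
Almost surely every `x_i` lies in `X`, and from then on the argument is deterministic. By
pigeonhole on a finite `δ`-net of `X`, once `N` exceeds the size of the net two of the points,
`x_i` and `x_j`, are within `δ` of each other. Testing the Rayleigh quotient of `K_N` on
`e_i - e_j` gives `λ_min(K_N) ≤ κ 0 - κ (x_i - x_j)`, which is small by continuity of `κ` at `0`,
while `λ_min(K_N) ≥ 0`.
-/

open MeasureTheory Filter Topology Matrix
open scoped MatrixOrder

theorem ae_mem_of_map_eq_smul_restrict {Ω α : Type*} [MeasurableSpace Ω] [MeasurableSpace α]
    {P : Measure Ω} {μ : Measure α} {f : Ω → α} {s : Set α} {c : ENNReal}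
    (hf : Measurable f) (hs : MeasurableSet s) (h : P.map f = c • μ.restrict s) :
    ∀ᵐ ω ∂P, f ω ∈ s :=
  (ae_map_iff hf.aemeasurable hs).1 (h ▸ Measure.ae_smul_measure (ae_restrict_mem hs) c)

theorem TotallyBounded.exists_ne_dist_lt {α : Type*} [PseudoMetricSpace α]
    {s : Set α} (hs : TotallyBounded s) {δ : ℝ} (hδ : 0 < δ) :
    ∃ M : ℕ, ∀ {ι : Type*} [Fintype ι] (y : ι → α), M < Fintype.card ι → (∀ i, y i ∈ s) →
      ∃ i j, i ≠ j ∧ dist (y i) (y j) < δ := by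
  obtain ⟨t, ht, hst⟩ := Metric.totallyBounded_iff.mp hs (δ / 2) (half_pos hδ)
  refine ⟨ht.toFinset.card, fun y hcard hy => ?_⟩
  have hcenter : ∀ i, ∃ z ∈ ht.toFinset, y i ∈ Metric.ball z (δ / 2) := fun i => by
    simpa using hst (hy i)
  choose center hcenter_mem hcenter_ball using hcenter
  obtain ⟨i, -, j, -, hij, hcij⟩ := Finset.exists_ne_map_eq_of_card_lt_of_maps_to
    (s := Finset.univ) (by simpa using hcard) fun i _ => hcenter_mem i
  refine ⟨i, j, hij, ?_⟩
  calc dist (y i) (y j) ≤ dist (y i) (center i) + dist (y j) (center i) :=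
        dist_triangle_right _ _ _
    _ < δ / 2 + δ / 2 := add_lt_add (hcenter_ball i) (hcij ▸ hcenter_ball j)
    _ = δ := add_halves δ

namespace Matrix.IsHermitian

variable {n : Type*} [Fintype n] [DecidableEq n] {A : Matrix n n ℝ} (hA : A.IsHermitian)
include hA

theorem iInf_eigenvalues_mul_dotProduct_self_le (v : n → ℝ) :
    (⨅ i, hA.eigenvalues i) * (v ⬝ᵥ v) ≤ v ⬝ᵥ (A *ᵥ v) := by
  have hle : algebraMap ℝ (Matrix n n ℝ) (⨅ i, hA.eigenvalues i) ≤ A := by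
    rw [algebraMap_le_iff_le_spectrum hA.isSelfAdjoint, hA.spectrum_real_eq_range_eigenvalues]
    rintro _ ⟨i, rfl⟩
    exact ciInf_le (Set.finite_range _).bddBelow i
  simpa [sub_mulVec, Algebra.algebraMap_eq_smul_one, smul_mulVec, dotProduct_smul] using
    (le_iff.mp hle).dotProduct_mulVec_nonneg v

theorem iInf_eigenvalues_le_of_ne {i j : n} (hij : i ≠ j) :
    (⨅ l, hA.eigenvalues l) ≤ (A i i + A j j) / 2 - A i j := by
  have hji : A j i = A i j := by simpa using hA.apply i j
  set v : n → ℝ := Pi.single i 1 - Pi.single j 1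
  have hvv : v ⬝ᵥ v = 2 := by
    simp [v, dotProduct_sub, hij, hij.symm]
    norm_num
  have hAv : v ⬝ᵥ (A *ᵥ v) = A i i + A j j - 2 * A i j := by
    simp [v, mulVec_sub, sub_dotProduct, dotProduct_sub, hji]
    ring
  have h := hA.iInf_eigenvalues_mul_dotProduct_self_le v
  rw [hvv, hAv] at h
  linarith

end Matrix.IsHermitian

theorem tendsto_iInf_eigenvalues_kernelMatrix_of_totallyBounded {E : Type*}
    [SeminormedAddCommGroup E] {κ : E → ℝ} (hκ : ContinuousAt κ 0) {y : ℕ → E}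
    (hy : TotallyBounded (Set.range y))
    (hK : ∀ N, (Matrix.of fun i j : Fin (N + 1) => κ (y i - y j)).PosSemidef) :
    Tendsto (fun N => ⨅ i, (hK N).1.eigenvalues i) atTop (𝓝 0) := by
  refine Metric.tendsto_atTop.2 fun ε hε => ?_
  obtain ⟨δ, hδ, hκδ⟩ := Metric.continuousAt_iff.mp hκ ε hε
  obtain ⟨M, hM⟩ := hy.exists_ne_dist_lt hδ
  refine ⟨M, fun N hN => ?_⟩
  obtain ⟨i, j, hij, hdist⟩ :=
    hM (fun i : Fin (N + 1) => y i) (by simpa using Nat.lt_succ_of_le hN) fun i => ⟨i, rfl⟩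
  have hpos : 0 ≤ ⨅ l, (hK N).1.eigenvalues l := le_ciInf (hK N).eigenvalues_nonneg
  have hle := (hK N).1.iInf_eigenvalues_le_of_ne hij
  have hclose : κ 0 - κ (y i - y j) < ε :=
    (abs_sub_lt_iff.mp (hκδ (by rwa [dist_zero_right, ← dist_eq_norm]))).2
  simp only [of_apply, sub_self] at hle
  rw [Real.dist_eq, sub_zero, abs_of_nonneg hpos]
  linarith

theorem smallest_eigenvalue_tendsto_zero_general
    (d : ℕ) (κ : EuclideanSpace ℝ (Fin d) → ℝ) (hκ_cont : Continuous κ)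
    (k : EuclideanSpace ℝ (Fin d) → EuclideanSpace ℝ (Fin d) → ℝ)
    (hk_stat : ∀ x y, k x y = κ (x - y))
    (hk_psd : ∀ (n : ℕ) (y : Fin n → EuclideanSpace ℝ (Fin d)),
      (Matrix.of fun i j => k (y i) (y j)).PosSemidef)
    (X : Set (EuclideanSpace ℝ (Fin d))) (hX_compact : IsCompact X)
    (Ω : Type*) [MeasurableSpace Ω] (P : Measure Ω)
    (x : ℕ → Ω → EuclideanSpace ℝ (Fin d))
    (hx_meas : ∀ i, Measurable (x i))
    (hx_unif : ∀ i, Measure.map (x i) P = (volume X)⁻¹ • volume.restrict X) :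
    ∀ᵐ ω ∂P, Tendsto
      (fun N : ℕ =>
        ⨅ i : Fin (N + 1),
          (hk_psd (N + 1) (fun i => x i ω)).1.eigenvalues i)
      atTop (nhds 0) := by
  have hmem : ∀ᵐ ω ∂P, ∀ i, x i ω ∈ X := ae_all_iff.2 fun i =>
    ae_mem_of_map_eq_smul_restrict (hx_meas i) hX_compact.measurableSet (hx_unif i)
  obtain rfl : k = fun a b => κ (a - b) := funext₂ hk_stat
  filter_upwards [hmem] with ω hω
  exact tendsto_iInf_eigenvalues_kernelMatrix_of_totallyBounded hκ_cont.continuousAt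
    (hX_compact.totallyBounded.subset (Set.range_subset_iff.2 hω)) fun N => hk_psd (N + 1) _

/-- Let `k(x,y) = κ(x − y)` be a continuous stationary positive
semi-definite kernel on `ℝ^d`, and let `x₁, x₂, …` be i.i.d. points uniformly distributed on
a compact set `X` of positive Lebesgue measure.  Then almost surely the smallest eigenvalue
of the kernel matrix `K_N = (k(x_i, x_j))_{i,j ≤ N}` tends to `0` as `N → ∞`. -/
theorem smallest_eigenvalue_tendsto_zero
    (d : ℕ) (κ : EuclideanSpace ℝ (Fin d) → ℝ) (hκ_cont : Continuous κ)
    (k : EuclideanSpace ℝ (Fin d) → EuclideanSpace ℝ (Fin d) → ℝ)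
    (hk_stat : ∀ x y, k x y = κ (x - y))
    (hk_psd : ∀ (n : ℕ) (y : Fin n → EuclideanSpace ℝ (Fin d)),
      (Matrix.of fun i j => k (y i) (y j)).PosSemidef)
    (X : Set (EuclideanSpace ℝ (Fin d))) (hX_compact : IsCompact X)
    (hX_pos : 0 < volume X)
    (Ω : Type*) [MeasurableSpace Ω] (P : Measure Ω) [IsProbabilityMeasure P]
    (x : ℕ → Ω → EuclideanSpace ℝ (Fin d))
    (hx_meas : ∀ i, Measurable (x i))
    (hx_indep : ProbabilityTheory.iIndepFun x P)
    (hx_unif : ∀ i, Measure.map (x i) P = (volume X)⁻¹ • volume.restrict X) :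
    ∀ᵐ ω ∂P, Tendsto
      (fun N : ℕ =>
        ⨅ i : Fin (N + 1),
          (hk_psd (N + 1) (fun i => x i ω)).1.eigenvalues i)
      atTop (nhds 0) :=
  smallest_eigenvalue_tendsto_zero_general d κ hκ_cont k hk_stat hk_psd X hX_compact Ω P x hx_meas
    hx_unif
end
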